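/- Let α be a well-ordered set, (X, d) a metric space over lexicographically ordered ℝ^α, and δ the ℤ^α-valued metric defined by δ(x,y) = r^{n(x,y)} for x ≠ y (where n(x,y) is the least coordinate at which d(x,y) is nonzero) and δ(x,x) = 0. Then d and δ induce the same topology on X: for every x ∈ X and every λ ∈ α, B_δ(x, r^λ) ⊇ B_d(x, r^{λ+1}) and B_d(x, r^λ) ⊇ B_δ(x, r^{λ+1}), where λ+1 denotes the successor of λ. -/

import Mathlib

/-- A metric on `X` with values in a linearly ordered abelian group `G`. -/
structure IsGMetric {X G : Type*} [AddCommGroup G] [LinearOrder G] [IsOrderedAddMonoid G] (d : X → X → G) : Prop where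
  nonneg : ∀ x y, 0 ≤ d x y
  eq_zero_iff : ∀ x y, d x y = 0 ↔ x = y
  symm : ∀ x y, d x y = d y x
  triangle : ∀ x y z, d x y ≤ d x z + d z y

/-- The element `r^l` of `Lex (ι → R)`: indicator of the coordinate `l`. -/
def unitVec {ι R : Type*} [DecidableEq ι] [Zero R] [One R] (l : ι) : Lex (ι → R) :=
  toLex fun m => if m = l then 1 else 0

/-- The open ball of a `G`-valued metric. -/
def gball {X G : Type*} [LT G] (d : X → X → G) (x : X) (g : G) : Set X := {y | d x y < g}

/-!
In the lexicographic order a vector is compared with `r^k` through its leading coordinate: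
a positive vector whose first nonzero coordinate is `n` lies strictly above every `r^k`
with `n < k` and strictly below every `r^l` with `l < n`. Hence `d x y < r^(l+1)` forces
`l < n x y`, i.e. `δ x y < r^l`; and `δ x y = r^(n x y) < r^(l+1)` forces `l + 1 < n x y`,
so `d x y < r^l`.
-/

namespace IsGMetric

variable {X G : Type*} [AddCommGroup G] [LinearOrder G] [IsOrderedAddMonoid G] {d : X → X → G}

theorem pos_of_ne (hd : IsGMetric d) {x y : X} (h : x ≠ y) : 0 < d x y :=
  (hd.nonneg x y).lt_of_ne' (mt (hd.eq_zero_iff x y).1 h)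

end IsGMetric

section Lex

variable {ι R : Type*} [LinearOrder ι]

theorem pos_apply_of_zero_lt_toLex [Preorder R] [Zero R] {f : ι → R} {n : ι}
    (h0 : 0 < toLex f) (hfn : f n ≠ 0) (hf : ∀ m < n, f m = 0) : 0 < f n := by
  obtain ⟨i, hbelow, hi⟩ := h0
  rcases lt_trichotomy i n with hin | rfl | hni
  · exact absurd (hf i hin) hi.ne'
  · exact hi
  · exact absurd (hbelow n hni).symm hfn

@[simp]
theorem unitVec_apply [Zero R] [One R] (l m : ι) :
    (unitVec l : Lex (ι → R)) m = if m = l then 1 else 0 :=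
  rfl

theorem unitVec_lt_toLex_of_lt [LT R] [Zero R] [One R] {f : ι → R} {n k : ι}
    (hf : ∀ m < n, f m = 0) (hfn : 0 < f n) (hk : n < k) : unitVec k < toLex f :=
  ⟨n, fun j hj => by simp [hf j hj, (hj.trans hk).ne], by simpa [hk.ne]⟩

variable [PartialOrder R] [Zero R] [One R] [ZeroLEOneClass R] [NeZero (1 : R)]

theorem unitVec_pos (l : ι) : (0 : Lex (ι → R)) < unitVec l :=
  ⟨l, fun j hj => (if_neg hj.ne).symm, by simp; exact zero_lt_one⟩

theorem unitVec_strictAnti : StrictAnti (unitVec : ι → Lex (ι → R)) := fun l k hlk =>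
  ⟨l, fun j hj => by simp [hj.ne, (hj.trans hlk).ne], by simp [hlk.ne]⟩

theorem toLex_lt_unitVec_of_lt {f : ι → R} {n l : ι} (hf : ∀ m < n, f m = 0) (hl : l < n) :
    toLex f < unitVec l :=
  ⟨l, fun j hj => by simp [hf j (hj.trans hl), hj.ne], by simp [hf l hl]⟩

end Lex

/-- With `d` a metric over lexicographic `ℝ^α`, `n x y` the least coordinate
at which `d x y` is nonzero, and `δ` the associated `ℤ^α`-valued metric
(`δ x y = r^{n x y}` for `x ≠ y`, `δ x x = 0`), the metrics `d` and `δ` have mutually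
nested balls: `B_d(x, r^{l+1}) ⊆ B_δ(x, r^l)` and `B_δ(x, r^{l+1}) ⊆ B_d(x, r^l)`,
where `l+1` is the order successor of `l` (every element of `α` is assumed to have a
successor). Hence they induce the same topology. -/
theorem stmt10 {α X : Type*} [LinearOrder α] [WellFoundedLT α] [SuccOrder α] [NoMaxOrder α]
    (d : X → X → Lex (α → ℝ)) (hd : IsGMetric d)
    (n : X → X → α)
    (hn : ∀ x y, x ≠ y →
      ofLex (d x y) (n x y) ≠ 0 ∧ ∀ m, m < n x y → ofLex (d x y) m = 0)
    (δ : X → X → Lex (α → ℤ)) (hδ0 : ∀ x, δ x x = 0)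
    (hδ : ∀ x y, x ≠ y → δ x y = unitVec (n x y)) :
    ∀ (x : X) (l : α),
      gball d x (unitVec (Order.succ l)) ⊆ gball δ x (unitVec l) ∧
      gball δ x (unitVec (Order.succ l)) ⊆ gball d x (unitVec l) := by
  intro x l
  constructor
  · intro y hy
    obtain rfl | hxy := eq_or_ne x y
    · simpa [gball, hδ0] using unitVec_pos l
    obtain ⟨hne, hbelow⟩ := hn x y hxy
    have hln : l < n x y := by
      by_contra! hnl
      have hlead := pos_apply_of_zero_lt_toLex (hd.pos_of_ne hxy) hne hbelow
      exact (unitVec_lt_toLex_of_lt hbelow hlead (hnl.trans_lt (Order.lt_succ l))).asymm hy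
    show δ x y < unitVec l
    rw [hδ x y hxy]
    exact unitVec_strictAnti hln
  · intro y hy
    obtain rfl | hxy := eq_or_ne x y
    · simpa [gball, (hd.eq_zero_iff x x).2 rfl] using unitVec_pos l
    have hsn : Order.succ l < n x y :=
      unitVec_strictAnti.lt_iff_gt.1 (by rw [← hδ x y hxy]; exact hy)
    exact toLex_lt_unitVec_of_lt (hn x y hxy).2 ((Order.le_succ l).trans_lt hsn)
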